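/- arXiv:1111.6937 — 2 statements merged into one kernel-verified Lean document; each statement's English description precedes it below -/
import Mathlib

section
/- Let D be a dataset and let K ⊆ D be a set of transactions that is shattered by the ranges R = {T_D(A) : ∅ ≠ A ⊆ I}. Then no transaction in K is a subset of (or equal to) another transaction in K; that is, K is an anti-chain under set inclusion. -/
open Finset

def suppSet {α : Type*} [DecidableEq α] (D : Finset (Finset α)) (A : Finset α) :
    Finset (Finset α) :=
  D.filter (fun τ => A ⊆ τ)

def Shattered {α : Type*} [DecidableEq α] (D K : Finset (Finset α)) : Prop :=
  ∀ B ⊆ K, ∃ A : Finset α, A.Nonempty ∧ suppSet D A ∩ K = B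

section

variable {α : Type*} [DecidableEq α] {D : Finset (Finset α)} {A τ τ' : Finset α}

theorem mem_suppSet : τ ∈ suppSet D A ↔ τ ∈ D ∧ A ⊆ τ :=
  mem_filter

theorem mem_suppSet_of_subset (hτ : τ ∈ suppSet D A) (hττ' : τ ⊆ τ') (hτ' : τ' ∈ D) :
    τ' ∈ suppSet D A :=
  mem_suppSet.2 ⟨hτ', (mem_suppSet.1 hτ).2.trans hττ'⟩

/-- A range isolating `τ` inside `K` would also contain every superset of `τ` in `K`. -/
theorem Shattered.eq_of_subset {K : Finset (Finset α)} (hK : K ⊆ D) (hsh : Shattered D K)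
    (hτ : τ ∈ K) (hτ' : τ' ∈ K) (hττ' : τ ⊆ τ') : τ = τ' := by
  obtain ⟨A, -, hA⟩ := hsh {τ} (singleton_subset_iff.2 hτ)
  have hτA : τ ∈ suppSet D A := (mem_inter.1 (hA ▸ mem_singleton_self τ)).1
  have hτ'A : τ' ∈ suppSet D A ∩ K := mem_inter.2 ⟨mem_suppSet_of_subset hτA hττ' (hK hτ'), hτ'⟩
  rw [hA] at hτ'A
  exact (mem_singleton.1 hτ'A).symm

end

/-- a set of transactions shattered by the ranges `{T_D(A) : ∅ ≠ A ⊆ I}`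
is an anti-chain under set inclusion. -/
theorem shattered_isAntichain {α : Type*} [DecidableEq α]
    (D K : Finset (Finset α)) (hK : K ⊆ D) (hsh : Shattered D K) :
    IsAntichain (· ⊆ ·) (K : Set (Finset α)) :=
  fun _ hτ _ hτ' hne hsub => hne (hsh.eq_of_subset hK hτ hτ' hsub)
end

section
/- Let 𝒮 be a relative (p, η)-approximation of the range space associated with dataset D, and let Y = "E ⇒ F" be an association rule with f_D(Y) ≥ p (so also f_D(E) ≥ p). Then the sample confidence satisfies c_𝒮(Y) ≤ ((1 + η)/(1 − η)) c_D(Y) and c_𝒮(Y) ≥ ((1 − η)/(1 + η)) c_D(Y). -/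
open Finset

noncomputable def freq {α : Type*} [DecidableEq α] (D : Multiset (Finset α))
    (A : Finset α) : ℝ :=
  ((D.countP (fun τ => A ⊆ τ) : ℕ) : ℝ) / (Multiset.card D : ℝ)

lemma freq_anti {α : Type*} [DecidableEq α] (D : Multiset (Finset α))
    {A B : Finset α} (h : A ⊆ B) : freq D B ≤ freq D A := by
  have hc : D.countP (fun τ => B ⊆ τ) ≤ D.countP (fun τ => A ⊆ τ) := by
    simp only [Multiset.countP_eq_card_filter]
    exact Multiset.card_le_card (Multiset.monotone_filter_right D fun τ hB => h.trans hB)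
  unfold freq
  gcongr

/-- if `S` is a relative `(p, η)`-approximation of the range space of `D`
and `Y = "E ⇒ F"` is an association rule with `f_D(Y) ≥ p` (hence also `f_D(E) ≥ p` by
anti-monotonicity), then the sample confidence satisfies
`((1-η)/(1+η)) c_D(Y) ≤ c_S(Y) ≤ ((1+η)/(1-η)) c_D(Y)`. -/
theorem ar_confidence_bounds {α : Type*} [DecidableEq α]
    (D S : Multiset (Finset α)) (p η : ℝ)
    (hη0 : 0 < η) (hη1 : η < 1) (hp0 : 0 < p)
    (happrox : ∀ X : Finset α, X.Nonempty → p ≤ freq D X →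
      (1 - η) * freq D X ≤ freq S X ∧ freq S X ≤ (1 + η) * freq D X)
    (E F : Finset α) (hE : E.Nonempty) (hF : F.Nonempty) (hdisj : Disjoint E F)
    (hfY : p ≤ freq D (E ∪ F)) (hSE : 0 < freq S E) :
    freq S (E ∪ F) / freq S E ≤ ((1 + η) / (1 - η)) * (freq D (E ∪ F) / freq D E) ∧
    ((1 - η) / (1 + η)) * (freq D (E ∪ F) / freq D E) ≤ freq S (E ∪ F) / freq S E := by
  have hanti : freq D (E ∪ F) ≤ freq D E := freq_anti D subset_union_left
  have hfE : p ≤ freq D E := le_trans hfY hanti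
  obtain ⟨hEF1, hEF2⟩ := happrox (E ∪ F) (hE.mono subset_union_left) hfY
  obtain ⟨hE1, hE2⟩ := happrox E hE hfE
  have hDE : 0 < freq D E := lt_of_lt_of_le hp0 hfE
  have hDY : 0 < freq D (E ∪ F) := lt_of_lt_of_le hp0 hfY
  have h1η : (0:ℝ) < 1 - η := by linarith
  have h1η' : (0:ℝ) < 1 + η := by linarith
  constructor
  · rw [div_le_iff₀ hSE]
    have key : freq S (E ∪ F) ≤ (1 + η) * freq D (E ∪ F) := hEF2
    have hSE' : (1 - η) * freq D E ≤ freq S E := hE1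
    calc freq S (E ∪ F) ≤ (1 + η) * freq D (E ∪ F) := key
      _ = ((1 + η) / (1 - η)) * (freq D (E ∪ F) / freq D E) * ((1 - η) * freq D E) := by
          field_simp
      _ ≤ ((1 + η) / (1 - η)) * (freq D (E ∪ F) / freq D E) * freq S E := by
          apply mul_le_mul_of_nonneg_left hSE'
          positivity
  · rw [le_div_iff₀ hSE]
    have key : (1 - η) * freq D (E ∪ F) ≤ freq S (E ∪ F) := hEF1
    have hSE' : freq S E ≤ (1 + η) * freq D E := hE2
    calc ((1 - η) / (1 + η)) * (freq D (E ∪ F) / freq D E) * freq S E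
        ≤ ((1 - η) / (1 + η)) * (freq D (E ∪ F) / freq D E) * ((1 + η) * freq D E) := by
          apply mul_le_mul_of_nonneg_left hSE'
          positivity
      _ = (1 - η) * freq D (E ∪ F) := by field_simp
      _ ≤ freq S (E ∪ F) := key
end
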